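/- Strongly connected (pure delay) case: if D i j < ∞ for all i, j ∈ V, then the full node set V belongs to U and satisfies V → V, and it is the unique self-loop of the information graph: for any k ∈ ℕ and j ∈ V, if s(k,j) = s(k+1,j) then s(k,j) = V. -/

import Mathlib

/-- The reachability set `s(k,j) = {i : D i j ≤ k}`. -/
def reach {V : Type*} (D : V → V → ℕ∞) (k : ℕ) (j : V) : Set V :=
  {i | D i j ≤ (k : ℕ∞)}

/-- The node set of the information graph: `U = {s(k,j) : k ∈ ℕ, j ∈ V}`. -/
def infoNodes {V : Type*} (D : V → V → ℕ∞) : Set (Set V) :=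
  {s | ∃ (k : ℕ) (j : V), s = reach D k j}

/-- The edge relation of the information graph: `r → s` iff
`r = s(k,j)` and `s = s(k+1,j)` for some `k, j`. -/
def infoEdge {V : Type*} (D : V → V → ℕ∞) (r s : Set V) : Prop :=
  ∃ (k : ℕ) (j : V), r = reach D k j ∧ s = reach D (k + 1) j

/-!
By the one-step decomposition, `s(k+1,j)` is the set of nodes within delay `1` of `s(k,j)`, so
`k ↦ s(k,j)` is the orbit of a fixed map on sets: once `s(k,j) = s(k+1,j)` the sequence is
constant from `k` on. Finite delays on a finite set are bounded by some `N`, and `s(N,j) = V`;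
hence a repeated value must be `V`, and `s(N,j) = s(N+1,j) = V` gives the self-loop.
-/

theorem ENat.exists_nat_forall_le_of_lt_top {ι : Type*} [Finite ι] (f : ι → ℕ∞)
    (hf : ∀ i, f i < ⊤) : ∃ N : ℕ, ∀ i, f i ≤ N := by
  cases nonempty_fintype ι
  refine ⟨Finset.univ.sup fun i => (f i).toNat, fun i => ?_⟩
  rw [← ENat.natCast_toNat (hf i).ne]
  exact_mod_cast Finset.le_sup (f := fun i => (f i).toNat) (Finset.mem_univ i)

section Reach

variable {V : Type*} {D : V → V → ℕ∞}

theorem reach_eq_univ_of_le {N k : ℕ} {j : V} (hN : ∀ i, D i j ≤ N) (hNk : N ≤ k) :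
    reach D k j = Set.univ :=
  Set.eq_univ_of_forall fun i => (hN i).trans (by exact_mod_cast hNk)

theorem reach_succ_eq
    (hc : ∀ (k : ℕ) (i j : V), D i j ≤ (k : ℕ∞) + 1 ↔ ∃ ℓ, D i ℓ ≤ 1 ∧ D ℓ j ≤ (k : ℕ∞))
    (k : ℕ) (j : V) :
    reach D (k + 1) j = {i | ∃ ℓ ∈ reach D k j, D i ℓ ≤ 1} := by
  ext i
  simp only [reach, Set.mem_ofPred_eq, Nat.cast_succ, hc]
  exact exists_congr fun ℓ => and_comm

theorem reach_add_eq_of_reach_eq_reach_succ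
    (hc : ∀ (k : ℕ) (i j : V), D i j ≤ (k : ℕ∞) + 1 ↔ ∃ ℓ, D i ℓ ≤ 1 ∧ D ℓ j ≤ (k : ℕ∞))
    {k : ℕ} {j : V}
    (hk : reach D k j = reach D (k + 1) j) (m : ℕ) : reach D (k + m) j = reach D k j := by
  induction m with
  | zero => rfl
  | succ m ih => rw [← add_assoc, reach_succ_eq hc, ih, ← reach_succ_eq hc, hk]

end Reach

theorem strongly_connected_case_general {V : Type*} [Fintype V] [Nonempty V]
    (D : V → V → ℕ∞)
    (hc : ∀ (k : ℕ) (i j : V),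
      D i j ≤ (k : ℕ∞) + 1 ↔ ∃ ℓ, D i ℓ ≤ 1 ∧ D ℓ j ≤ (k : ℕ∞))
    (hfin : ∀ i j : V, D i j < ⊤) :
    (Set.univ ∈ infoNodes D) ∧
    infoEdge D Set.univ Set.univ ∧
    ∀ (k : ℕ) (j : V), reach D k j = reach D (k + 1) j →
      reach D k j = Set.univ := by
  obtain ⟨N, hN⟩ := ENat.exists_nat_forall_le_of_lt_top (fun p : V × V => D p.1 p.2)
    fun p => hfin p.1 p.2
  have reach_univ (k : ℕ) (j : V) (hNk : N ≤ k) : reach D k j = Set.univ :=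
    reach_eq_univ_of_le (fun i => hN (i, j)) hNk
  obtain ⟨j₀⟩ := ‹Nonempty V›
  refine ⟨⟨N, j₀, (reach_univ N j₀ le_rfl).symm⟩,
    ⟨N, j₀, (reach_univ N j₀ le_rfl).symm, (reach_univ (N + 1) j₀ N.le_succ).symm⟩,
    fun k j hk => ?_⟩
  rw [← reach_add_eq_of_reach_eq_reach_succ hc hk N]
  exact reach_univ (k + N) j (Nat.le_add_left N k)

/-- Strongly connected (pure delay) case: if `D i j < ∞` for all `i, j`, then
the full node set `V` belongs to `U`, satisfies `V → V`, and is the unique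
self-loop of the information graph. -/
theorem strongly_connected_case {V : Type*} [Fintype V] [Nonempty V]
    (D : V → V → ℕ∞)
    (ha : ∀ i, D i i = 0)
    (hb : ∀ i ℓ j, D i j ≤ D i ℓ + D ℓ j)
    (hc : ∀ (k : ℕ) (i j : V),
      D i j ≤ (k : ℕ∞) + 1 ↔ ∃ ℓ, D i ℓ ≤ 1 ∧ D ℓ j ≤ (k : ℕ∞))
    (hfin : ∀ i j : V, D i j < ⊤) :
    (Set.univ ∈ infoNodes D) ∧
    infoEdge D Set.univ Set.univ ∧
    ∀ (k : ℕ) (j : V), reach D k j = reach D (k + 1) j →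
      reach D k j = Set.univ :=
  strongly_connected_case_general D hc hfin
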